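/- Suppose F(·,x,a) has bounded variation along x̄ uniformly over A, let δ̄>0 and ε̄>0 satisfy η^δ̄_ε̄(T) < ∞, and assume (C1) and (C2). Then for every δ ∈ (0,δ̄) and every δ' ∈ (0,δ): η^{δ'}(T) ≤ lim_{T'↑T} η^δ(T') + sup{ d_H(F(T,x,a), F(T⁻,x,a)) : x ∈ x̄(T)+δ𝔹, a ∈ A }, where F(T⁻,x,a) denotes the set-valued left limit of F(·,x,a) at T. -/

import Mathlib

open Set Metric Filter MeasureTheory Pointwise
open scoped ENNReal Topology

noncomputable section

/-- Euclidean `n`-space `ℝⁿ`. -/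
abbrev En (n : ℕ) : Type := EuclideanSpace ℝ (Fin n)

/-- A partition `{t₀ = S, t₁, …, t_N = t}` of the interval `[S, t]`. -/
structure IntervalPartition (S t : ℝ) where
  N : ℕ
  pts : ℕ → ℝ
  hN : 0 < N
  first : pts 0 = S
  last : pts N = t
  mono : ∀ i, i < N → pts i < pts (i + 1)

/-- `diam(𝒯) ≤ ε` : every subinterval of the partition has length at most `ε`. -/
def IntervalPartition.diamLE {S t : ℝ} (P : IntervalPartition S t) (ε : ℝ) : Prop :=
  ∀ i, i < P.N → P.pts (i + 1) - P.pts i ≤ ε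

/-- The sum `I^δ(𝒯) = Σᵢ sup { d_H(F(tᵢ₊₁,x,a), F(tᵢ,x,a)) :
x ∈ x̄([tᵢ,tᵢ₊₁]) + δ𝔹, a ∈ A }` for a multifunction `F` along `x̄`, uniformly over `A`. -/
noncomputable def mvSum {n k : ℕ} (F : ℝ → En n → En k → Set (En n))
    (xbar : ℝ → En n) (A : Set (En k)) (δ : ℝ) {S t : ℝ} (P : IntervalPartition S t) : ℝ≥0∞ :=
  ∑ i ∈ Finset.range P.N,
    ⨆ x ∈ xbar '' Set.Icc (P.pts i) (P.pts (i + 1)) + Metric.closedBall (0 : En n) δ,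
      ⨆ a ∈ A, EMetric.hausdorffEdist (F (P.pts (i + 1)) x a) (F (P.pts i) x a)

/-- The `(δ,ε)`-perturbed cumulative variation function `η^δ_ε(t)`:
the supremum of `I^δ(𝒯)` over partitions `𝒯` of `[S,t]` with `diam(𝒯) ≤ ε`.
(For `t = S` there are no partitions and the value is `0`.) -/
noncomputable def mvEtaEps {n k : ℕ} (F : ℝ → En n → En k → Set (En n))
    (xbar : ℝ → En n) (A : Set (En k)) (δ ε : ℝ) (S t : ℝ) : ℝ≥0∞ :=
  ⨆ (P : IntervalPartition S t) (_ : P.diamLE ε), mvSum F xbar A δ P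

/-- The `δ`-perturbed cumulative variation function `η^δ(t) = lim_{ε↓0} η^δ_ε(t)`
(the limit of the decreasing-in-`ε` family equals the infimum). -/
noncomputable def mvEtaDelta {n k : ℕ} (F : ℝ → En n → En k → Set (En n))
    (xbar : ℝ → En n) (A : Set (En k)) (δ : ℝ) (S t : ℝ) : ℝ≥0∞ :=
  ⨅ (ε : ℝ) (_ : 0 < ε), mvEtaEps F xbar A δ ε S t

/-- The cumulative variation function `η(t) = lim_{δ↓0} η^δ(t)`. -/
noncomputable def mvEta {n k : ℕ} (F : ℝ → En n → En k → Set (En n))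
    (xbar : ℝ → En n) (A : Set (En k)) (S t : ℝ) : ℝ≥0∞ :=
  ⨅ (δ : ℝ) (_ : 0 < δ), mvEtaDelta F xbar A δ S t

/-- `F(·,x,a)` has bounded variation along `x̄` uniformly over `A` : `η(T) < ∞`. -/
def HasBVAlongUniformly {n k : ℕ} (F : ℝ → En n → En k → Set (En n))
    (xbar : ℝ → En n) (A : Set (En k)) (S T : ℝ) : Prop :=
  mvEta F xbar A S T < ⊤

/-- Hypothesis (C1): nonempty closed values, measurability in `t` (Castaing-type
characterization via distance functions), and uniform boundedness near `x̄`. -/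
def HypC1 {n k : ℕ} (F : ℝ → En n → En k → Set (En n))
    (xbar : ℝ → En n) (A : Set (En k)) (S T δbar : ℝ) : Prop :=
  (∀ t ∈ Set.Icc S T, ∀ x : En n, ∀ a ∈ A, (F t x a).Nonempty ∧ IsClosed (F t x a)) ∧
  (∀ x : En n, ∀ a ∈ A, ∀ v : En n,
      Measurable fun t : ℝ => EMetric.infEdist v (F t x a)) ∧
  (∃ c : ℝ, 0 < c ∧ ∀ t ∈ Set.Icc S T, ∀ x ∈ Metric.closedBall (xbar t) δbar, ∀ a ∈ A,
      F t x a ⊆ Metric.closedBall (0 : En n) c)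

/-- Hypothesis (C2): uniform continuity of `(x,a) ↦ F(t,x,a)` near `x̄`,
with a modulus of continuity `γ`. -/
def HypC2 {n k : ℕ} (F : ℝ → En n → En k → Set (En n))
    (xbar : ℝ → En n) (A : Set (En k)) (S T δbar : ℝ) : Prop :=
  ∃ γ : ℝ → ℝ, (∀ s, 0 ≤ γ s) ∧ Tendsto γ (𝓝[>] (0 : ℝ)) (𝓝 0) ∧
    ∀ t ∈ Set.Icc S T, ∀ x ∈ Metric.closedBall (xbar t) δbar,
      ∀ x' ∈ Metric.closedBall (xbar t) δbar, ∀ a ∈ A, ∀ a' ∈ A,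
        F t x a ⊆ F t x' a' + Metric.closedBall (0 : En n) (γ (‖x - x'‖ + ‖a - a'‖))

/-- The Kuratowski upper limit of a family of sets along a filter `l`. -/
def kLimsup {α : Type*} [PseudoEMetricSpace α] (l : Filter ℝ) (G : ℝ → Set α) : Set α :=
  {v | ∀ ε : ℝ≥0∞, 0 < ε → ∃ᶠ s in l, EMetric.infEdist v (G s) < ε}

/-- The Kuratowski lower limit of a family of sets along a filter `l`. -/
def kLiminf {α : Type*} [PseudoEMetricSpace α] (l : Filter ℝ) (G : ℝ → Set α) : Set α :=
  {v | Tendsto (fun s => EMetric.infEdist v (G s)) l (𝓝 0)}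

/-- The set-valued limit along `l` exists: upper and lower Kuratowski limits coincide. -/
def KLimExists {α : Type*} [PseudoEMetricSpace α] (l : Filter ℝ) (G : ℝ → Set α) : Prop :=
  kLimsup l G = kLiminf l G

/-- The set-valued right limit `F(s̄⁺, x, a) = lim_{s ↓ s̄} F(s,x,a)` (with `s ∈ (s̄,T]`). -/
def rightLim {n k : ℕ} (F : ℝ → En n → En k → Set (En n)) (T sbar : ℝ)
    (x : En n) (a : En k) : Set (En n) :=
  kLiminf (𝓝[Set.Ioc sbar T] sbar) fun s => F s x a

/-- The set-valued left limit `F(t̄⁻, x, a) = lim_{t ↑ t̄} F(t,x,a)` (with `t ∈ [S,t̄)`). -/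
def leftLim {n k : ℕ} (F : ℝ → En n → En k → Set (En n)) (S tbar : ℝ)
    (x : En n) (a : En k) : Set (En n) :=
  kLiminf (𝓝[Set.Ico S tbar] tbar) fun s => F s x a


/-! The partial sums of a fine partition of `[S,T]` with radius `δ'`, up to its penultimate point
`t'`, are dominated by `η^δ(t')`: refining an interval and enlarging the radius by the
oscillation of `x̄` only increases the sum. The last term is split by the triangle inequality
through `F(T⁻,x,a)`. Finiteness of `sup_{T'<T} η^δ(T')` makes `F(·,x,a)` uniformly Cauchy for the
Hausdorff distance as `t ↑ T`, since `d_H(F(q,x,a), F(p,x,a)) + η^δ(p) ≤ η^δ(q)` for `x` near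
`x̄(T)`. As the closed sets of a complete space are complete for the Hausdorff distance, `F(t,x,a)`
has a Hausdorff limit, which is the Kuratowski lower limit `F(T⁻,x,a)`, uniformly in `(x,a)`. -/

theorem exists_mem_biSup_le_add {ι : Type*} {s : Set ι} {f : ι → ℝ≥0∞} (hs : s.Nonempty)
    (h : ⨆ i ∈ s, f i ≠ ⊤) {ρ : ℝ≥0∞} (hρ : ρ ≠ 0) : ∃ c ∈ s, ⨆ i ∈ s, f i ≤ f c + ρ := by
  rcases le_or_gt (⨆ i ∈ s, f i) ρ with hle | hlt
  · obtain ⟨c, hc⟩ := hs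
    exact ⟨c, hc, hle.trans le_add_self⟩
  · obtain ⟨c, hc, hlt'⟩ := lt_biSup_iff.1 (ENNReal.sub_lt_self h (hlt.trans_le' bot_le).ne' hρ)
    exact ⟨c, hc, tsub_le_iff_right.1 hlt'.le⟩

theorem closedBall_subset_image_add_closedBall {β E : Type*} [SeminormedAddCommGroup E]
    {f : β → E} {I : Set β} {r : β} (hr : r ∈ I) (δ : ℝ) :
    closedBall (f r) δ ⊆ f '' I + closedBall 0 δ := fun z hz =>
  ⟨f r, mem_image_of_mem f hr, z - f r, mem_closedBall_iff_norm.1 hz |> mem_closedBall_zero_iff.2,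
    add_sub_cancel _ _⟩

theorem image_add_closedBall_subset_closedBall {β E : Type*} [SeminormedAddCommGroup E]
    {f : β → E} {I : Set β} {z : E} {ρ : ℝ} (h : ∀ u ∈ I, dist (f u) z ≤ ρ) (δ : ℝ) :
    f '' I + closedBall 0 δ ⊆ closedBall z (δ + ρ) := by
  rintro _ ⟨_, ⟨u, hu, rfl⟩, b, hb, rfl⟩
  calc dist (f u + b) z ≤ dist (f u + b) (f u) + dist (f u) z := dist_triangle _ _ _
    _ ≤ δ + ρ := by
      rw [dist_self_add_left]
      exact add_le_add (mem_closedBall_zero_iff.1 hb) (h u hu)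

theorem hausdorffEDist_le_sum_range {α : Type*} [PseudoEMetricSpace α] (G : ℕ → Set α) (m : ℕ) :
    hausdorffEDist (G m) (G 0) ≤ ∑ j ∈ Finset.range m, hausdorffEDist (G (j + 1)) (G j) := by
  induction m with
  | zero => simp [hausdorffEDist_self]
  | succ m ih =>
    calc hausdorffEDist (G (m + 1)) (G 0)
        ≤ hausdorffEDist (G (m + 1)) (G m) + hausdorffEDist (G m) (G 0) := hausdorffEDist_triangle
      _ ≤ _ := by rw [Finset.sum_range_succ, add_comm]; gcongr

namespace IntervalPartition

variable {S t : ℝ} (P : IntervalPartition S t)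

theorem pts_mono {i j : ℕ} (hij : i ≤ j) (hj : j ≤ P.N) : P.pts i ≤ P.pts j := by
  induction j, hij using Nat.le_induction with
  | base => exact le_rfl
  | succ j _ ih => exact (ih (by omega)).trans (P.mono j hj).le

theorem pts_mem_Icc {i : ℕ} (hi : i ≤ P.N) : P.pts i ∈ Icc S t := by
  have h₀ := P.pts_mono (Nat.zero_le i) hi
  have h₁ := P.pts_mono hi le_rfl
  rw [P.first] at h₀
  rw [P.last] at h₁
  exact ⟨h₀, h₁⟩

theorem left_lt_right (P : IntervalPartition S t) : S < t := by
  obtain ⟨M, hM⟩ : ∃ M, P.N = M + 1 := ⟨P.N - 1, by have := P.hN; omega⟩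
  have h := (P.pts_mono (Nat.zero_le M) (by omega)).trans_lt (P.mono M (by omega))
  rwa [P.first, ← hM, P.last] at h

def uniform {s s' : ℝ} (hss' : s < s') (m : ℕ) (hm : 0 < m) : IntervalPartition s s' where
  N := m
  pts j := s + j * ((s' - s) / m)
  hN := hm
  first := by simp
  last := by field_simp; ring
  mono i _ := by
    have : 0 < (s' - s) / m := div_pos (sub_pos.2 hss') (Nat.cast_pos.2 hm)
    push_cast
    linarith

theorem exists_diamLE {s s' ε : ℝ} (hss' : s < s') (hε : 0 < ε) :
    ∃ Q : IntervalPartition s s', Q.diamLE ε := by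
  obtain ⟨m, hm⟩ := exists_nat_gt ((s' - s) / ε)
  have hm0 : (0 : ℝ) < m := (div_pos (sub_pos.2 hss') hε).trans hm
  refine ⟨uniform hss' m (Nat.cast_pos.1 hm0), fun i _ => ?_⟩
  have : (s' - s) / m ≤ ε := by
    rw [div_le_iff₀ hm0]
    rw [div_lt_iff₀ hε] at hm
    linarith
  simp only [uniform]
  push_cast
  linarith

variable {s' : ℝ} (Q : IntervalPartition t s')

def appendPts (i : ℕ) : ℝ := if i < P.N then P.pts i else Q.pts (i - P.N)

theorem appendPts_of_le {i : ℕ} (hi : i ≤ P.N) : appendPts P Q i = P.pts i := by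
  rcases hi.lt_or_eq with hi | rfl
  · simp [appendPts, hi]
  · simp [appendPts, P.last, Q.first]

theorem appendPts_add (j : ℕ) : appendPts P Q (P.N + j) = Q.pts j := by
  simp [appendPts]

def append : IntervalPartition S s' where
  N := P.N + Q.N
  pts := appendPts P Q
  hN := Nat.add_pos_right _ Q.hN
  first := (appendPts_of_le P Q (Nat.zero_le _)).trans P.first
  last := (appendPts_add P Q Q.N).trans Q.last
  mono i hi := by
    rcases Nat.lt_or_ge i P.N with h | h
    · rw [appendPts_of_le P Q h.le, appendPts_of_le P Q h]
      exact P.mono i h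
    · obtain ⟨j, rfl⟩ := Nat.exists_eq_add_of_le h
      rw [appendPts_add, add_assoc, appendPts_add]
      exact Q.mono j (by omega)

theorem append_diamLE {ε : ℝ} (hP : P.diamLE ε) (hQ : Q.diamLE ε) : (P.append Q).diamLE ε := by
  intro i hi
  show appendPts P Q (i + 1) - appendPts P Q i ≤ ε
  rcases Nat.lt_or_ge i P.N with h | h
  · rw [appendPts_of_le P Q h.le, appendPts_of_le P Q h]
    exact hP i h
  · obtain ⟨j, rfl⟩ := Nat.exists_eq_add_of_le h
    rw [appendPts_add, add_assoc, appendPts_add]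
    exact hQ j (by simp only [append] at hi; omega)

end IntervalPartition

section Variation

variable {n k : ℕ} {F : ℝ → En n → En k → Set (En n)} {xbar : ℝ → En n} {A : Set (En k)}

variable (F xbar A) in
def mvTerm (δ s s' : ℝ) : ℝ≥0∞ :=
  ⨆ x ∈ xbar '' Icc s s' + closedBall (0 : En n) δ, ⨆ a ∈ A, hausdorffEDist (F s' x a) (F s x a)

theorem mvSum_eq_sum_mvTerm (δ : ℝ) {S t : ℝ} (P : IntervalPartition S t) :
    mvSum F xbar A δ P =
      ∑ i ∈ Finset.range P.N, mvTerm F xbar A δ (P.pts i) (P.pts (i + 1)) :=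
  rfl

theorem mvSum_append (δ : ℝ) {S s s' : ℝ} (P : IntervalPartition S s) (Q : IntervalPartition s s') :
    mvSum F xbar A δ (P.append Q) = mvSum F xbar A δ P + mvSum F xbar A δ Q := by
  simp only [mvSum_eq_sum_mvTerm]
  show ∑ i ∈ Finset.range (P.N + Q.N), mvTerm F xbar A δ (P.appendPts Q i) (P.appendPts Q (i + 1))
    = _
  rw [Finset.sum_range_add]
  congr 1
  · refine Finset.sum_congr rfl fun i hi => ?_
    rw [Finset.mem_range] at hi
    rw [P.appendPts_of_le Q hi.le, P.appendPts_of_le Q hi]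
  · refine Finset.sum_congr rfl fun j _ => ?_
    rw [P.appendPts_add, add_assoc, P.appendPts_add]

theorem hausdorffEDist_le_mvSum {δ s s' : ℝ} (Q : IntervalPartition s s') {x : En n} {a : En k}
    (ha : a ∈ A) (hx : ∀ r ∈ Icc s s', dist x (xbar r) ≤ δ) :
    hausdorffEDist (F s' x a) (F s x a) ≤ mvSum F xbar A δ Q := by
  have hchain := hausdorffEDist_le_sum_range (fun i => F (Q.pts i) x a) Q.N
  simp only [Q.first, Q.last] at hchain
  refine hchain.trans (Finset.sum_le_sum fun i hi => ?_)
  have hi : i < Q.N := Finset.mem_range.1 hi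
  have hxi : x ∈ xbar '' Icc (Q.pts i) (Q.pts (i + 1)) + closedBall 0 δ :=
    closedBall_subset_image_add_closedBall (left_mem_Icc.2 (Q.mono i hi).le) δ
      (mem_closedBall.2 (hx _ (Q.pts_mem_Icc hi.le)))
  exact le_iSup₂_of_le x hxi (le_iSup₂_of_le a ha le_rfl)

theorem mvTerm_le_mvSum {δ δ' s s' : ℝ} (Q : IntervalPartition s s')
    (hosc : ∀ u ∈ Icc s s', ∀ v ∈ Icc s s', dist (xbar u) (xbar v) ≤ δ - δ') :
    mvTerm F xbar A δ' s s' ≤ mvSum F xbar A δ Q :=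
  iSup₂_le fun x hx => iSup₂_le fun a ha => hausdorffEDist_le_mvSum Q ha fun r hr => by
    simpa using image_add_closedBall_subset_closedBall (fun u hu => hosc u hu r hr) δ' hx

theorem mvSum_le_mvEtaEps {δ ε S t : ℝ} (P : IntervalPartition S t) (hP : P.diamLE ε) :
    mvSum F xbar A δ P ≤ mvEtaEps F xbar A δ ε S t :=
  le_iSup₂ (f := fun (P : IntervalPartition S t) _ => mvSum F xbar A δ P) P hP

theorem mvEtaDelta_le_mvEtaEps {δ ε : ℝ} (hε : 0 < ε) (S t : ℝ) :
    mvEtaDelta F xbar A δ S t ≤ mvEtaEps F xbar A δ ε S t :=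
  iInf₂_le ε hε

theorem mvEtaEps_self (δ ε S : ℝ) : mvEtaEps F xbar A δ ε S S = 0 :=
  le_antisymm (iSup₂_le fun P _ => absurd P.left_lt_right (lt_irrefl S)) bot_le

theorem mvEtaEps_add_mvSum_le {δ ε S s s' : ℝ} (hε : 0 < ε) (hSs : S ≤ s)
    (Q : IntervalPartition s s') (hQ : Q.diamLE ε) :
    mvEtaEps F xbar A δ ε S s + mvSum F xbar A δ Q ≤ mvEtaEps F xbar A δ ε S s' := by
  rcases hSs.eq_or_lt with rfl | hSs
  · rw [mvEtaEps_self, zero_add]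
    exact mvSum_le_mvEtaEps Q hQ
  · rw [mvEtaEps, ENNReal.biSup_add' (IntervalPartition.exists_diamLE hSs hε)]
    refine iSup₂_le fun P hP => ?_
    rw [← mvSum_append]
    exact mvSum_le_mvEtaEps _ (P.append_diamLE Q hP hQ)

theorem mvEtaEps_mono {δ ε S t t' : ℝ} (hε : 0 < ε) (hSt : S ≤ t) (htt' : t ≤ t') :
    mvEtaEps F xbar A δ ε S t ≤ mvEtaEps F xbar A δ ε S t' := by
  rcases htt'.eq_or_lt with rfl | htt'
  · exact le_rfl
  · obtain ⟨Q, hQ⟩ := IntervalPartition.exists_diamLE htt' hε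
    exact le_self_add.trans (mvEtaEps_add_mvSum_le hε hSt Q hQ)

theorem mvEtaDelta_mono {δ S t t' : ℝ} (hSt : S ≤ t) (htt' : t ≤ t') :
    mvEtaDelta F xbar A δ S t ≤ mvEtaDelta F xbar A δ S t' :=
  iInf₂_mono fun _ hε => mvEtaEps_mono hε hSt htt'

theorem hausdorffEDist_add_mvEtaDelta_le {δ S p q : ℝ} {x : En n} {a : En k} (ha : a ∈ A)
    (hSp : S ≤ p) (hpq : p < q) (hx : ∀ r ∈ Icc p q, dist x (xbar r) ≤ δ) :
    hausdorffEDist (F q x a) (F p x a) + mvEtaDelta F xbar A δ S p ≤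
      mvEtaDelta F xbar A δ S q :=
  le_iInf₂ fun ε hε => by
    obtain ⟨Q, hQ⟩ := IntervalPartition.exists_diamLE hpq hε
    calc _ ≤ mvSum F xbar A δ Q + mvEtaEps F xbar A δ ε S p :=
          add_le_add (hausdorffEDist_le_mvSum Q ha hx) (mvEtaDelta_le_mvEtaEps hε S p)
      _ ≤ _ := by
          rw [add_comm]
          exact mvEtaEps_add_mvSum_le hε hSp Q hQ

theorem sum_range_mvTerm_le_mvEtaEps {δ δ' ε S t : ℝ} (hε : 0 < ε) (P : IntervalPartition S t)
    (hosc : ∀ i < P.N, ∀ u ∈ Icc (P.pts i) (P.pts (i + 1)), ∀ v ∈ Icc (P.pts i) (P.pts (i + 1)),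
      dist (xbar u) (xbar v) ≤ δ - δ')
    {j : ℕ} (hj : j ≤ P.N) :
    ∑ i ∈ Finset.range j, mvTerm F xbar A δ' (P.pts i) (P.pts (i + 1)) ≤
      mvEtaEps F xbar A δ ε S (P.pts j) := by
  induction j with
  | zero => simp
  | succ j ih =>
    obtain ⟨Q, hQ⟩ := IntervalPartition.exists_diamLE (P.mono j hj) hε
    rw [Finset.sum_range_succ]
    calc _ ≤ mvEtaEps F xbar A δ ε S (P.pts j) + mvSum F xbar A δ Q :=
          add_le_add (ih (by omega)) (mvTerm_le_mvSum Q (hosc j hj))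
      _ ≤ _ := mvEtaEps_add_mvSum_le hε (P.pts_mem_Icc (by omega)).1 Q hQ

end Variation

section HausdorffLimit

variable {α : Type*}

theorem kLiminf_eq_of_tendsto_hausdorffEDist [PseudoEMetricSpace α] {l : Filter ℝ} [l.NeBot]
    {G : ℝ → Set α} {K : Set α} (hK : IsClosed K)
    (hGK : Tendsto (fun s => hausdorffEDist (G s) K) l (𝓝 0)) : kLiminf l G = K := by
  ext v
  show Tendsto (fun s => infEDist v (G s)) l (𝓝 0) ↔ v ∈ K
  constructor
  · intro hv
    have hsum : Tendsto (fun s => infEDist v (G s) + hausdorffEDist (G s) K) l (𝓝 0) := by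
      simpa using hv.add hGK
    rw [mem_iff_infEDist_zero_of_closed hK]
    exact le_antisymm (ge_of_tendsto hsum (Eventually.of_forall fun _ =>
      infEDist_le_infEDist_add_hausdorffEDist)) bot_le
  · intro hv
    refine tendsto_of_tendsto_of_tendsto_of_le_of_le tendsto_const_nhds hGK (fun _ => bot_le)
      fun s => ?_
    calc infEDist v (G s) ≤ infEDist v K + hausdorffEDist K (G s) :=
          infEDist_le_infEDist_add_hausdorffEDist
      _ = hausdorffEDist (G s) K := by rw [infEDist_zero_of_mem hv, zero_add, hausdorffEDist_comm]

theorem exists_isClosed_tendsto_hausdorffEDist [EMetricSpace α] [CompleteSpace α]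
    {l : Filter ℝ} [l.NeBot] {G : ℝ → Set α}
    (hG : ∀ ε ≠ 0, ∃ U ∈ l, ∀ p ∈ U, ∀ q ∈ U, hausdorffEDist (G p) (G q) ≤ ε) :
    ∃ K : Set α, IsClosed K ∧ Tendsto (fun s => hausdorffEDist (G s) K) l (𝓝 0) := by
  let G' : ℝ → TopologicalSpace.Closeds α := fun s => ⟨closure (G s), isClosed_closure⟩
  have hcauchy : Cauchy (l.map G') := by
    refine EMetric.cauchy_iff.2 ⟨(map_neBot (m := G')).ne, fun ε hε => ?_⟩
    obtain ⟨ε', hε', hε'ε⟩ := exists_between hε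
    obtain ⟨U, hU, hUε⟩ := hG ε' hε'.ne'
    refine ⟨G' '' U, image_mem_map hU, ?_⟩
    rintro _ ⟨p, hp, rfl⟩ _ ⟨q, hq, rfl⟩
    rw [TopologicalSpace.Closeds.edist_eq]
    simpa [G', hausdorffEDist_closure] using (hUε p hp q hq).trans_lt hε'ε
  obtain ⟨K, hK⟩ := CompleteSpace.complete hcauchy
  refine ⟨K, K.isClosed, ?_⟩
  simpa [G', TopologicalSpace.Closeds.edist_eq, hausdorffEDist_closure_left] using
    tendsto_iff_edist_tendsto_0.1 hK

theorem hausdorffEDist_kLiminf_le [EMetricSpace α] [CompleteSpace α] {l : Filter ℝ} [l.NeBot]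
    {G : ℝ → Set α} (hG : ∀ ε ≠ 0, ∃ U ∈ l, ∀ p ∈ U, ∀ q ∈ U, hausdorffEDist (G p) (G q) ≤ ε)
    {U : Set ℝ} (hU : U ∈ l) {ρ : ℝ≥0∞} (hρ : ∀ p ∈ U, ∀ q ∈ U, hausdorffEDist (G p) (G q) ≤ ρ)
    {s : ℝ} (hs : s ∈ U) : hausdorffEDist (G s) (kLiminf l G) ≤ ρ := by
  obtain ⟨K, hK, hGK⟩ := exists_isClosed_tendsto_hausdorffEDist hG
  rw [kLiminf_eq_of_tendsto_hausdorffEDist hK hGK]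
  have hlim : Tendsto (fun q => ρ + hausdorffEDist (G q) K) l (𝓝 ρ) := by
    simpa using tendsto_const_nhds.add hGK
  refine ge_of_tendsto hlim ?_
  filter_upwards [hU] with q hq
  exact hausdorffEDist_triangle.trans (by gcongr; exact hρ s hs q hq)

end HausdorffLimit

section LeftLimit

variable {n k : ℕ} {F : ℝ → En n → En k → Set (En n)} {xbar : ℝ → En n} {A : Set (En k)}

theorem exists_hausdorffEDist_le_of_iSup_mvEtaDelta_ne_top {δ S T c₀ : ℝ} (hc₀ : c₀ ∈ Ico S T)
    (hL : ⨆ T' ∈ Ico S T, mvEtaDelta F xbar A δ S T' ≠ ⊤) {U : Set (En n)}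
    (hU : ∀ x ∈ U, ∀ r ∈ Ico c₀ T, dist x (xbar r) ≤ δ) {ρ : ℝ≥0∞} (hρ : ρ ≠ 0) :
    ∃ c ∈ Ico c₀ T, ∀ p ∈ Ioo c T, ∀ q ∈ Ioo c T, ∀ x ∈ U, ∀ a ∈ A,
      hausdorffEDist (F p x a) (F q x a) ≤ ρ := by
  set L := ⨆ T' ∈ Ico S T, mvEtaDelta F xbar A δ S T'
  have hle_L : ∀ t ∈ Ico S T, mvEtaDelta F xbar A δ S t ≤ L := fun t ht =>
    le_iSup₂ (f := fun t (_ : t ∈ Ico S T) => mvEtaDelta F xbar A δ S t) t ht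
  obtain ⟨c₁, hc₁, hLc₁⟩ := exists_mem_biSup_le_add ⟨c₀, hc₀⟩ hL hρ
  have key : ∀ p q, max c₀ c₁ < p → p < q → q < T → ∀ x ∈ U, ∀ a ∈ A,
      hausdorffEDist (F q x a) (F p x a) ≤ ρ := by
    intro p q hp hpq hqT x hx a ha
    have hSp : S ≤ p := hc₀.1.trans (le_max_left _ _ |>.trans hp.le)
    have hfin : mvEtaDelta F xbar A δ S p ≠ ⊤ :=
      ne_top_of_le_ne_top hL (hle_L p ⟨hSp, hpq.trans hqT⟩)
    refine (ENNReal.add_le_add_iff_right hfin).1 ?_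
    calc hausdorffEDist (F q x a) (F p x a) + mvEtaDelta F xbar A δ S p
        ≤ mvEtaDelta F xbar A δ S q := hausdorffEDist_add_mvEtaDelta_le ha hSp hpq
          fun r hr => hU x hx r ⟨(le_max_left _ _).trans (hp.le.trans hr.1), hr.2.trans_lt hqT⟩
      _ ≤ L := hle_L q ⟨hSp.trans hpq.le, hqT⟩
      _ ≤ mvEtaDelta F xbar A δ S c₁ + ρ := hLc₁
      _ ≤ ρ + mvEtaDelta F xbar A δ S p := by
          rw [add_comm]
          gcongr
          exact mvEtaDelta_mono hc₁.1 ((le_max_right _ _).trans hp.le)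
  refine ⟨max c₀ c₁, ⟨le_max_left _ _, max_lt hc₀.2 hc₁.2⟩, fun p hp q hq x hx a ha => ?_⟩
  rcases lt_trichotomy p q with hpq | rfl | hqp
  · rw [hausdorffEDist_comm]
    exact key p q hp.1 hpq hq.2 x hx a ha
  · simp [hausdorffEDist_self]
  · exact key q p hq.1 hqp hp.2 x hx a ha

theorem exists_hausdorffEDist_leftLim_le {δ S T c₀ : ℝ} (hc₀ : c₀ ∈ Ico S T)
    (hL : ⨆ T' ∈ Ico S T, mvEtaDelta F xbar A δ S T' ≠ ⊤) {U : Set (En n)}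
    (hU : ∀ x ∈ U, ∀ r ∈ Ico c₀ T, dist x (xbar r) ≤ δ) {θ : ℝ≥0∞} (hθ : θ ≠ 0) :
    ∃ c < T, ∀ s ∈ Ioo c T, ∀ x ∈ U, ∀ a ∈ A,
      hausdorffEDist (F s x a) (leftLim F S T x a) ≤ θ := by
  obtain ⟨c, hc, hcθ⟩ := exists_hausdorffEDist_le_of_iSup_mvEtaDelta_ne_top hc₀ hL hU hθ
  refine ⟨c, hc.2, fun s hs x hx a ha => ?_⟩
  rw [leftLim, nhdsWithin_Ico_eq_nhdsLT (hc₀.1.trans_lt hc₀.2)]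
  refine hausdorffEDist_kLiminf_le (fun ε hε => ?_) (Ioo_mem_nhdsLT hc.2)
    (fun p hp q hq => hcθ p hp q hq x hx a ha) hs
  obtain ⟨c', hc', hc'ε⟩ := exists_hausdorffEDist_le_of_iSup_mvEtaDelta_ne_top hc₀ hL hU hε
  exact ⟨Ioo c' T, Ioo_mem_nhdsLT hc'.2, fun p hp q hq => hc'ε p hp q hq x hx a ha⟩

theorem exists_mvSum_le_iSup_mvEtaDelta_add_mvTerm {δ δ' ε S T : ℝ}
    (hosc : ∀ u ∈ Icc S T, ∀ v ∈ Icc S T, dist u v ≤ ε → dist (xbar u) (xbar v) ≤ δ - δ')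
    (P : IntervalPartition S T) (hP : P.diamLE ε) :
    ∃ t' ∈ Ico S T, T - ε ≤ t' ∧ mvSum F xbar A δ' P ≤
      (⨆ T' ∈ Ico S T, mvEtaDelta F xbar A δ S T') + mvTerm F xbar A δ' t' T := by
  obtain ⟨M, hM⟩ : ∃ M, P.N = M + 1 := ⟨P.N - 1, by have := P.hN; omega⟩
  have hlast : P.pts (M + 1) = T := hM ▸ P.last
  have hM_lt : P.pts M < T := by simpa [hlast] using P.mono M (by omega)
  have hSM : S ≤ P.pts M := (P.pts_mem_Icc (by omega)).1
  have hsub : ∀ i < P.N, ∀ u ∈ Icc (P.pts i) (P.pts (i + 1)), ∀ v ∈ Icc (P.pts i) (P.pts (i + 1)),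
      dist (xbar u) (xbar v) ≤ δ - δ' := fun i hi u hu v hv =>
    have hI : Icc (P.pts i) (P.pts (i + 1)) ⊆ Icc S T :=
      Icc_subset_Icc (P.pts_mem_Icc hi.le).1 (P.pts_mem_Icc hi).2
    hosc u (hI hu) v (hI hv) ((Real.dist_le_of_mem_Icc hu hv).trans (hP i hi))
  have hstep := hP M (by omega)
  rw [hlast] at hstep
  refine ⟨P.pts M, ⟨hSM, hM_lt⟩, by linarith, ?_⟩
  rw [mvSum_eq_sum_mvTerm, hM, Finset.sum_range_succ, hlast]
  gcongr
  exact le_iSup₂_of_le (P.pts M) ⟨hSM, hM_lt⟩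
    (le_iInf₂ fun ε' hε' => sum_range_mvTerm_le_mvEtaEps hε' P hsub (by omega))

theorem mvTerm_le_iSup_hausdorffEDist_add {δ δ' t' T : ℝ} {θ : ℝ≥0∞} {U : Set (En n)}
    (G : En n → En k → Set (En n)) (hU : xbar '' Icc t' T + closedBall 0 δ' ⊆ U)
    (hUδ : U ⊆ closedBall (xbar T) δ)
    (hG : ∀ x ∈ U, ∀ a ∈ A, hausdorffEDist (F t' x a) (G x a) ≤ θ) :
    mvTerm F xbar A δ' t' T ≤
      (⨆ x ∈ closedBall (xbar T) δ, ⨆ a ∈ A, hausdorffEDist (F T x a) (G x a)) + θ :=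
  iSup₂_le fun x hx => iSup₂_le fun a ha =>
    calc hausdorffEDist (F T x a) (F t' x a)
        ≤ hausdorffEDist (F T x a) (G x a) + hausdorffEDist (G x a) (F t' x a) :=
          hausdorffEDist_triangle
      _ ≤ _ := by
          rw [hausdorffEDist_comm (s := G x a)]
          exact add_le_add (le_iSup₂_of_le x (hUδ (hU hx)) (le_iSup₂_of_le a ha le_rfl))
            (hG x (hU hx) a ha)

theorem mvEtaDelta_le_iSup_add_iSup_hausdorffEDist_add {δ δ' ρ ε₁ c S T : ℝ} {θ : ℝ≥0∞}
    (G : En n → En k → Set (En n)) (hρδ : ρ ≤ δ - δ') (hε₁ : 0 < ε₁) (hcT : c < T)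
    (hosc : ∀ u ∈ Icc S T, ∀ v ∈ Icc S T, dist u v ≤ ε₁ → dist (xbar u) (xbar v) ≤ ρ)
    (hG : ∀ s ∈ Ioo c T, ∀ x ∈ closedBall (xbar T) (δ' + ρ), ∀ a ∈ A,
      hausdorffEDist (F s x a) (G x a) ≤ θ) :
    mvEtaDelta F xbar A δ' S T ≤ (⨆ T' ∈ Ico S T, mvEtaDelta F xbar A δ S T') +
      (⨆ x ∈ closedBall (xbar T) δ, ⨆ a ∈ A, hausdorffEDist (F T x a) (G x a)) + θ := by
  set ε := min ε₁ ((T - c) / 2)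
  have hεε₁ : ε ≤ ε₁ := min_le_left _ _
  have hεc : ε ≤ (T - c) / 2 := min_le_right _ _
  have hε : 0 < ε := lt_min hε₁ (by linarith)
  refine (mvEtaDelta_le_mvEtaEps hε S T).trans (iSup₂_le fun P hP => ?_)
  obtain ⟨t', ht', hTt', hsum⟩ := exists_mvSum_le_iSup_mvEtaDelta_add_mvTerm (δ := δ) (δ' := δ')
    (fun u hu v hv huv => (hosc u hu v hv (huv.trans hεε₁)).trans hρδ) P hP
  have hnear : ∀ u ∈ Icc t' T, dist (xbar u) (xbar T) ≤ ρ := fun u hu =>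
    hosc u ⟨ht'.1.trans hu.1, hu.2⟩ T ⟨ht'.1.trans ht'.2.le, le_rfl⟩ <| by
      rw [Real.dist_eq, abs_sub_comm, abs_of_nonneg (by linarith [hu.2])]
      linarith [hu.1]
  refine hsum.trans ?_
  rw [add_assoc]
  gcongr
  exact mvTerm_le_iSup_hausdorffEDist_add G (image_add_closedBall_subset_closedBall hnear δ')
    (closedBall_subset_closedBall (by linarith)) fun x hx a ha =>
      hG t' ⟨by linarith, ht'.2⟩ x hx a ha

end LeftLimit

theorem statement8_general {n k : ℕ} (F : ℝ → En n → En k → Set (En n))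
    (xbar : ℝ → En n) (A : Set (En k)) (S T : ℝ) (hST : S < T)
    (hx : ContinuousOn xbar (Set.Icc S T))
    (δbar : ℝ) :
    ∀ δ ∈ Set.Ioo 0 δbar, ∀ δ' ∈ Set.Ioo 0 δ,
      mvEtaDelta F xbar A δ' S T ≤
        (⨆ T' ∈ Set.Ico S T, mvEtaDelta F xbar A δ S T') +
          ⨆ x ∈ Metric.closedBall (xbar T) δ, ⨆ a ∈ A,
            EMetric.hausdorffEdist (F T x a) (leftLim F S T x a) := by
  rintro δ - δ' ⟨-, hδ'δ⟩
  rcases eq_or_ne (⨆ T' ∈ Ico S T, mvEtaDelta F xbar A δ S T') ⊤ with hL | hL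
  · rw [hL, top_add]
    exact le_top
  set ρ := (δ - δ') / 2 with hρ
  obtain ⟨ε₁, hε₁, hosc⟩ := uniformContinuousOn_iff_le.1
    (isCompact_Icc.uniformContinuousOn_of_continuous hx) ρ (by positivity)
  set c₀ := max S (T - ε₁)
  have hc₀ : c₀ ∈ Ico S T := ⟨le_max_left _ _, max_lt hST (by linarith)⟩
  have hU : ∀ x ∈ closedBall (xbar T) (δ' + ρ), ∀ r ∈ Ico c₀ T, dist x (xbar r) ≤ δ := by
    intro x hx r hr
    have hrT : dist (xbar r) (xbar T) ≤ ρ := hosc r ⟨hc₀.1.trans hr.1, hr.2.le⟩ T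
      ⟨hST.le, le_rfl⟩ <| by
        rw [Real.dist_eq, abs_le]
        constructor <;> linarith [le_max_right S (T - ε₁), hr.1, hr.2]
    linarith [dist_triangle_right x (xbar r) (xbar T), mem_closedBall.1 hx]
  refine ENNReal.le_of_forall_pos_le_add fun θ hθ _ => ?_
  obtain ⟨c, hcT, happrox⟩ :=
    exists_hausdorffEDist_leftLim_le hc₀ hL hU (ENNReal.coe_ne_zero.2 hθ.ne')
  exact mvEtaDelta_le_iSup_add_iSup_hausdorffEDist_add (leftLim F S T) (by linarith) hε₁ hcT
    hosc happrox

/-- Under bounded variation along `x̄` uniformly over `A`,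
`η^δ̄_ε̄(T) < ∞`, (C1) and (C2), for every `0 < δ' < δ < δ̄`:
`η^{δ'}(T) ≤ lim_{T'↑T} η^δ(T') + sup{ d_H(F(T,x,a), F(T⁻,x,a)) : x ∈ x̄(T)+δ𝔹, a ∈ A }`
(the left limit of the increasing function `η^δ` being its supremum over `[S,T)`). -/
theorem statement8 {n k : ℕ} (F : ℝ → En n → En k → Set (En n))
    (xbar : ℝ → En n) (A : Set (En k)) (S T : ℝ) (hST : S < T)
    (hA : IsCompact A) (hx : ContinuousOn xbar (Set.Icc S T))
    (hBV : HasBVAlongUniformly F xbar A S T)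
    (δbar εbar : ℝ) (hδbar : 0 < δbar) (hεbar : 0 < εbar)
    (hfin : mvEtaEps F xbar A δbar εbar S T < ⊤)
    (hC1 : HypC1 F xbar A S T δbar) (hC2 : HypC2 F xbar A S T δbar) :
    ∀ δ ∈ Set.Ioo 0 δbar, ∀ δ' ∈ Set.Ioo 0 δ,
      mvEtaDelta F xbar A δ' S T ≤
        (⨆ T' ∈ Set.Ico S T, mvEtaDelta F xbar A δ S T') +
          ⨆ x ∈ Metric.closedBall (xbar T) δ, ⨆ a ∈ A,
            EMetric.hausdorffEdist (F T x a) (leftLim F S T x a) :=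
  statement8_general F xbar A S T hST hx δbar

end
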